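/- Let n ≥ 1, let u : ℝ^n → ℝ be a convex Lipschitz function that is coercive (u(x) → ∞ as |x| → ∞), and suppose u satisfies, for some constant c > 0 and continuous functions f : ℝ^n → ℝ, φ : ℝ^{n+1} → ℝ with f ≥ c₀ > 0 and φ ≥ c₀ > 0, the weak Monge–Ampère equation ∫_B f(x) dx = ∫_{∂u(B)} c φ(x, u*(x)) dx for all Borel B ⊂ ℝ^n. Then for every t ∈ ℝ the sublevel set Ω_t = {x : u(x) < t} is bounded, and there exist constants 0 < c₁ < c₂ (depending on t) such that c₁ λ(B) ≤ λ(∂u(B)) ≤ c₂ λ(B) for every Borel set B ⊂ Ω_t, where λ denotes Lebesgue measure on ℝ^n. -/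

import Mathlib

open MeasureTheory Metric Set Filter
open scoped RealInnerProductSpace ENNReal NNReal Topology

noncomputable section

/-- `ℝ^n` as a Euclidean space. -/
abbrev En (n : ℕ) := EuclideanSpace ℝ (Fin n)

/-- The subgradient of a function `u` at a point `x`:
`∂u(x) = {p : u(y) ≥ u(x) + p·(y−x) for all y}`. -/
def subgrad {n : ℕ} (u : En n → ℝ) (x : En n) : Set (En n) :=
  {p | ∀ y, u x + ⟪p, y - x⟫ ≤ u y}

/-- The image of a set `B` under the subgradient: `∂u(B) = ⋃_{x ∈ B} ∂u(x)`. -/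
def subgradImage {n : ℕ} (u : En n → ℝ) (B : Set (En n)) : Set (En n) :=
  ⋃ x ∈ B, subgrad u x

/-- The Fenchel–Legendre transform `u*(x) = sup_y (x·y − u(y))` (real-valued version). -/
def fenchel {n : ℕ} (u : En n → ℝ) (x : En n) : ℝ :=
  ⨆ y, (⟪x, y⟫ - u y)

/-- The vector `(x, t) ∈ ℝ^{n+1}` whose first `n` coordinates are `x` and last is `t`. -/
def lift {n : ℕ} (x : En n) (t : ℝ) : En (n + 1) :=
  WithLp.toLp 2 (Fin.snoc x t : Fin (n + 1) → ℝ)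

/-! A Lipschitz constant `K` bounds every subgradient, and for base points in a bounded set it
also bounds the Legendre transform at those subgradients (`u*(p) = ⟪p, x⟫ - u x` for
`p ∈ ∂u(x)`). Since coercivity makes `Ω_t` bounded, both densities `f` on `Ω_t` and
`c φ(p, u*(p))` on `∂u(Ω_t)` lie between positive constants, and the equation compares the two
measures. The set `∂u(B)` need not be measurable, so for the lower bound the equation is
tested on compact `F ⊆ B`, whose image `∂u(F)` is compact, and inner regularity gives `B`. -/

lemma Filter.Tendsto.isBounded_setOf_lt {X : Type*} [PseudoMetricSpace X] {g : X → ℝ}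
    (hg : Tendsto g (cocompact X) atTop) (t : ℝ) : Bornology.IsBounded {x | g x < t} :=
  Bornology.isBounded_def.2 <| cobounded_le_cocompact <|
    (hg.eventually_ge_atTop t).mono fun _ hx => not_lt.2 hx

lemma Bornology.IsBounded.exists_pos_forall_le {X : Type*} [PseudoMetricSpace X] [ProperSpace X]
    {g : X → ℝ} (hg : Continuous g) {s : Set X} (hs : Bornology.IsBounded s) :
    ∃ M > 0, ∀ x ∈ s, g x ≤ M := by
  obtain ⟨C, hC⟩ := hs.isCompact_closure.exists_bound_of_continuousOn hg.continuousOn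
  exact ⟨max C 1, by positivity, fun x hx =>
    (le_abs_self _).trans ((hC x (subset_closure hx)).trans (le_max_left _ _))⟩

lemma ENNReal.ofReal_div_mul_le {a b : ℝ} {x y : ℝ≥0∞} (hb : 0 < b)
    (h : ENNReal.ofReal a * x ≤ ENNReal.ofReal b * y) : ENNReal.ofReal (a / b) * x ≤ y := by
  rw [ENNReal.ofReal_div_of_pos hb, div_eq_mul_inv, mul_right_comm, ← div_eq_mul_inv,
    ENNReal.div_le_iff (ENNReal.ofReal_pos.2 hb).ne' ENNReal.ofReal_ne_top, mul_comm y]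
  exact h

lemma ENNReal.le_ofReal_div_mul {a b : ℝ} {x y : ℝ≥0∞} (ha : 0 < a)
    (h : ENNReal.ofReal a * x ≤ ENNReal.ofReal b * y) : x ≤ ENNReal.ofReal (b / a) * y := by
  rw [ENNReal.ofReal_div_of_pos ha, div_eq_mul_inv, mul_right_comm, ← div_eq_mul_inv,
    ENNReal.le_div_iff_mul_le (.inl (ENNReal.ofReal_pos.2 ha).ne') (.inl ENNReal.ofReal_ne_top),
    mul_comm]
  exact h

section SetLIntegral

variable {α : Type*} [MeasurableSpace α] {μ : Measure α} {g : α → ℝ}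

lemma ofReal_mul_le_setLIntegral_ofReal {a : ℝ} (h : ∀ x, a ≤ g x) (s : Set α) :
    ENNReal.ofReal a * μ s ≤ ∫⁻ x in s, ENNReal.ofReal (g x) ∂μ := by
  rw [← setLIntegral_const]
  exact lintegral_mono fun x => ENNReal.ofReal_le_ofReal (h x)

lemma setLIntegral_ofReal_le_ofReal_mul {s : Set α} (hs : MeasurableSet s) {b : ℝ}
    (h : ∀ x ∈ s, g x ≤ b) : ∫⁻ x in s, ENNReal.ofReal (g x) ∂μ ≤ ENNReal.ofReal b * μ s := by
  rw [← setLIntegral_const]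
  exact lintegral_mono_ae <| (ae_restrict_mem hs).mono fun x hx => ENNReal.ofReal_le_ofReal (h x hx)

end SetLIntegral

lemma norm_lift_le {n : ℕ} (x : En n) (s : ℝ) : ‖lift x s‖ ≤ ‖x‖ + |s| := by
  have hsq : ‖lift x s‖ ^ 2 = ‖x‖ ^ 2 + s ^ 2 := by
    simp [EuclideanSpace.real_norm_sq_eq, Fin.sum_univ_castSucc, lift]
  rw [← pow_le_pow_iff_left₀ (norm_nonneg _) (by positivity) two_ne_zero, hsq]
  nlinarith [norm_nonneg x, abs_nonneg s, sq_abs s]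

section Subgradient

variable {n : ℕ} {u : En n → ℝ}

@[simp]
lemma mem_subgradImage {B : Set (En n)} {p : En n} :
    p ∈ subgradImage u B ↔ ∃ x ∈ B, p ∈ subgrad u x := by
  simp [subgradImage]

lemma subgradImage_mono {A B : Set (En n)} (h : A ⊆ B) : subgradImage u A ⊆ subgradImage u B :=
  biUnion_subset_biUnion_left h

lemma fenchel_eq_of_mem_subgrad {x p : En n} (hp : p ∈ subgrad u x) :
    fenchel u p = ⟪p, x⟫ - u x := by
  have hle : ∀ y, ⟪p, y⟫ - u y ≤ ⟪p, x⟫ - u x := fun y => by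
    have := hp y
    rw [inner_sub_right] at this
    linarith
  exact le_antisymm (ciSup_le hle) (le_ciSup ⟨_, forall_mem_range.2 hle⟩ x)

variable {K : ℝ≥0}

lemma LipschitzWith.norm_le_of_mem_subgrad (hlip : LipschitzWith K u) {x p : En n}
    (hp : p ∈ subgrad u x) : ‖p‖ ≤ K := by
  have hup : ‖p‖ ^ 2 ≤ u (x + p) - u x := by
    have := hp (x + p)
    rw [add_sub_cancel_left, real_inner_self_eq_norm_sq] at this
    linarith
  have hdown : u (x + p) - u x ≤ K * ‖p‖ := by
    simpa using (le_abs_self _).trans (hlip.dist_le_mul (x + p) x)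
  nlinarith [norm_nonneg p]

lemma LipschitzWith.isCompact_subgradImage (hlip : LipschitzWith K u) {F : Set (En n)}
    (hF : IsCompact F) : IsCompact (subgradImage u F) := by
  have hgraph : IsCompact {z : En n × En n | z.1 ∈ F ∧ z.2 ∈ subgrad u z.1} := by
    refine (hF.prod (isCompact_closedBall 0 K)).of_isClosed_subset ?_ ?_
    · have hu := hlip.continuous
      have hset : {z : En n × En n | z.1 ∈ F ∧ z.2 ∈ subgrad u z.1} =
          Prod.fst ⁻¹' F ∩ ⋂ y, {z | u z.1 + ⟪z.2, y - z.1⟫ ≤ u y} := by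
        ext
        simp [subgrad]
      rw [hset]
      exact (hF.isClosed.preimage continuous_fst).inter <|
        isClosed_iInter fun y => isClosed_le (by fun_prop) (by fun_prop)
    · rintro ⟨x, p⟩ ⟨hx, hp⟩
      exact ⟨hx, by simpa using hlip.norm_le_of_mem_subgrad hp⟩
  convert hgraph.image continuous_snd
  ext p
  simp

end Subgradient

lemma LipschitzWith.isBounded_image_lift_fenchel {n : ℕ} {u : En n → ℝ} {K : ℝ≥0}
    (hlip : LipschitzWith K u) {B : Set (En n)} (hB : Bornology.IsBounded B) :
    Bornology.IsBounded ((fun p => lift p (fenchel u p)) '' subgradImage u B) := by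
  obtain ⟨R, hR⟩ := hB.exists_norm_le
  obtain ⟨M, hM⟩ := (hlip.isBounded_image hB).exists_norm_le
  refine isBounded_iff_forall_norm_le.2 ⟨K + (K * R + M), ?_⟩
  rintro _ ⟨p, hp, rfl⟩
  obtain ⟨x, hx, hpx⟩ := mem_subgradImage.1 hp
  have hpK := hlip.norm_le_of_mem_subgrad hpx
  have hfenchel : |fenchel u p| ≤ K * R + M := by
    rw [fenchel_eq_of_mem_subgrad hpx]
    calc |⟪p, x⟫ - u x| ≤ ‖p‖ * ‖x‖ + ‖u x‖ :=
          (abs_sub _ _).trans (add_le_add (abs_real_inner_le_norm p x) le_rfl)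
      _ ≤ K * R + M := add_le_add
          (mul_le_mul hpK (hR x hx) (norm_nonneg _) K.2) (hM _ (mem_image_of_mem u hx))
  exact (norm_lift_le p _).trans (add_le_add hpK hfenchel)

section MongeAmpere

variable {n : ℕ} {u : En n → ℝ} {f : En n → ℝ} {φ : En (n + 1) → ℝ} {c c₀ M : ℝ}
  {B : Set (En n)}

lemma ofReal_mul_volume_subgradImage_le (hB : MeasurableSet B)
    (hsol : ∫⁻ x in B, ENNReal.ofReal (f x) =
      ∫⁻ x in subgradImage u B, ENNReal.ofReal (c * φ (lift x (fenchel u x))))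
    (hc : 0 ≤ c) (hφ : ∀ z, c₀ ≤ φ z) (hfB : ∀ x ∈ B, f x ≤ M) :
    ENNReal.ofReal (c * c₀) * volume (subgradImage u B) ≤ ENNReal.ofReal M * volume B :=
  calc ENNReal.ofReal (c * c₀) * volume (subgradImage u B)
      ≤ ∫⁻ x in subgradImage u B, ENNReal.ofReal (c * φ (lift x (fenchel u x))) :=
        ofReal_mul_le_setLIntegral_ofReal (fun _ => mul_le_mul_of_nonneg_left (hφ _) hc) _
    _ = ∫⁻ x in B, ENNReal.ofReal (f x) := hsol.symm
    _ ≤ ENNReal.ofReal M * volume B := setLIntegral_ofReal_le_ofReal_mul hB hfB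

lemma ofReal_mul_volume_le_volume_subgradImage {K : ℝ≥0} (hlip : LipschitzWith K u)
    (hB : MeasurableSet B)
    (hsol : ∀ F ⊆ B, IsCompact F → ∫⁻ x in F, ENNReal.ofReal (f x) =
      ∫⁻ x in subgradImage u F, ENNReal.ofReal (c * φ (lift x (fenchel u x))))
    (hf : ∀ x, c₀ ≤ f x) (hφB : ∀ p ∈ subgradImage u B, c * φ (lift p (fenchel u p)) ≤ M) :
    ENNReal.ofReal c₀ * volume B ≤ ENNReal.ofReal M * volume (subgradImage u B) := by
  rw [hB.measure_eq_iSup_isCompact]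
  simp only [ENNReal.mul_iSup, iSup_le_iff]
  intro F hFB hF
  calc ENNReal.ofReal c₀ * volume F ≤ ∫⁻ x in F, ENNReal.ofReal (f x) :=
        ofReal_mul_le_setLIntegral_ofReal hf F
    _ = ∫⁻ x in subgradImage u F, ENNReal.ofReal (c * φ (lift x (fenchel u x))) :=
        hsol F hFB hF
    _ ≤ ENNReal.ofReal M * volume (subgradImage u F) :=
        setLIntegral_ofReal_le_ofReal_mul (hlip.isCompact_subgradImage hF).measurableSet
          fun p hp => hφB p (subgradImage_mono hFB hp)
    _ ≤ ENNReal.ofReal M * volume (subgradImage u B) := by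
        gcongr
        exact subgradImage_mono hFB

end MongeAmpere

theorem sublevel_bounded_and_MA_comparable_general (n : ℕ)
    (u : En n → ℝ)
    (K : ℝ≥0) (hlip : LipschitzWith K u)
    (hcoe : Tendsto u (cocompact (En n)) atTop)
    (c c₀ : ℝ) (hc : 0 < c) (hc₀ : 0 < c₀)
    (f : En n → ℝ) (φ : En (n + 1) → ℝ)
    (hfc : Continuous f) (hφc : Continuous φ)
    (hf : ∀ x, c₀ ≤ f x) (hφ : ∀ z, c₀ ≤ φ z)
    -- weak Monge–Ampère equation
    (hsol : ∀ B : Set (En n), MeasurableSet B →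
      ∫⁻ x in B, ENNReal.ofReal (f x) =
        ∫⁻ x in subgradImage u B, ENNReal.ofReal (c * φ (lift x (fenchel u x)))) :
    ∀ t : ℝ,
      Bornology.IsBounded {x : En n | u x < t} ∧
      ∃ c₁ c₂ : ℝ, 0 < c₁ ∧ c₁ < c₂ ∧
        ∀ B : Set (En n), MeasurableSet B → B ⊆ {x : En n | u x < t} →
          ENNReal.ofReal c₁ * volume B ≤ volume (subgradImage u B) ∧
          volume (subgradImage u B) ≤ ENNReal.ofReal c₂ * volume B := by
  intro t
  have hΩ := hcoe.isBounded_setOf_lt t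
  obtain ⟨Mf, hMf, hfΩ⟩ := hΩ.exists_pos_forall_le hfc
  obtain ⟨Mφ, hMφ, hφΩ⟩ := (hlip.isBounded_image_lift_fenchel hΩ).exists_pos_forall_le hφc
  refine ⟨hΩ, c₀ / (c * Mφ), c₀ / (c * Mφ) + Mf / (c * c₀), by positivity,
    lt_add_of_pos_right _ (by positivity), fun B hB hBΩ => ⟨?_, ?_⟩⟩
  · refine ENNReal.ofReal_div_mul_le (by positivity) <|
      ofReal_mul_volume_le_volume_subgradImage hlip hB (fun F _ hF => hsol F hF.measurableSet) hf
        fun p hp => mul_le_mul_of_nonneg_left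
          (hφΩ _ (mem_image_of_mem _ (subgradImage_mono hBΩ hp))) hc.le
  · calc volume (subgradImage u B) ≤ ENNReal.ofReal (Mf / (c * c₀)) * volume B :=
          ENNReal.le_ofReal_div_mul (by positivity) <|
            ofReal_mul_volume_subgradImage_le hB (hsol B hB) hc.le hφ fun x hx => hfΩ x (hBΩ hx)
      _ ≤ ENNReal.ofReal (c₀ / (c * Mφ) + Mf / (c * c₀)) * volume B := by
          gcongr
          exact le_add_of_nonneg_left (by positivity)

/-- for a coercive convex Lipschitz weak solution of the weighted
Monge–Ampère equation with strictly positive continuous data, every sublevel set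
`Ω_t = {u < t}` is bounded and the Monge–Ampère measure `B ↦ λ(∂u(B))` is comparable
to the Lebesgue measure on subsets of `Ω_t`. -/
theorem sublevel_bounded_and_MA_comparable (n : ℕ) (hn : 1 ≤ n)
    (u : En n → ℝ) (hu : ConvexOn ℝ univ u)
    (K : ℝ≥0) (hlip : LipschitzWith K u)
    (hcoe : Tendsto u (cocompact (En n)) atTop)
    (c c₀ : ℝ) (hc : 0 < c) (hc₀ : 0 < c₀)
    (f : En n → ℝ) (φ : En (n + 1) → ℝ)
    (hfc : Continuous f) (hφc : Continuous φ)
    (hf : ∀ x, c₀ ≤ f x) (hφ : ∀ z, c₀ ≤ φ z)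
    -- weak Monge–Ampère equation
    (hsol : ∀ B : Set (En n), MeasurableSet B →
      ∫⁻ x in B, ENNReal.ofReal (f x) =
        ∫⁻ x in subgradImage u B, ENNReal.ofReal (c * φ (lift x (fenchel u x)))) :
    ∀ t : ℝ,
      Bornology.IsBounded {x : En n | u x < t} ∧
      ∃ c₁ c₂ : ℝ, 0 < c₁ ∧ c₁ < c₂ ∧
        ∀ B : Set (En n), MeasurableSet B → B ⊆ {x : En n | u x < t} →
          ENNReal.ofReal c₁ * volume B ≤ volume (subgradImage u B) ∧
          volume (subgradImage u B) ≤ ENNReal.ofReal c₂ * volume B :=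
  sublevel_bounded_and_MA_comparable_general n u K hlip hcoe c c₀ hc hc₀ f φ hfc hφc hf hφ hsol
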